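/- Let w, v ∈ S_n and let i ∈ {1,…,n−1} be such that v ⪯ w in Bruhat order, i ∉ supp(v), supp(w) = supp(v) ∪ {i}, and B(w) is order-isomorphic to C₂ × B(v) with the componentwise order. Then i is unconfined in every reduced word of w. -/

import Mathlib

/-!
The length is realised as the number of inversions on `{1, …, n}`, and the Bruhat order through
Ehresmann's rank criterion `RankLE`: a subword of a reduced word of `w` lies below `w` for
`RankLE`, and anything below `w` for `RankLE` has a reduced word that is a subword of *any*
given reduced word of `w`. Hence `⪯` is a partial order on `B(w)` whose height function is the
length and whose atoms below `z` are the `σ_j` with `j ∈ supp z`.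

An isomorphism `B(w) ≅ C₂ × B(v)` preserves heights and atoms: if `z ↦ (ε, y)` then
`ℓ z = ε + ℓ y` and `|supp z| = ε + |supp y|`. So `ℓ w = ℓ v + 1`, and a reduced word of `v`
sitting inside a reduced word of `w` omits exactly one letter, the only occurrence of `i`.

If `i` were confined by `c = i ± 1`, then `u = σ_i σ_c σ_i ⪯ w`. Counting ranks and atoms, `u`
lies in the bottom copy of `B(v)` while `v ↦ (top, x)`, since the atom of the top copy can only
be `σ_i`. Then `B(v) ≅ C₂ × B(x)` with the new letter `m` given by `σ_i ↦ σ_m`, and the image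
of `u` is a braid `σ_m σ_m' σ_m ⪯ v`. So `m` is confined in `v`, and induction on `ℓ w` ends
the argument.
-/

/-- The adjacent transposition `σ_i`, swapping `i` and `i+1` (acting on `ℕ`). -/
def sigmaT (i : ℕ) : Equiv.Perm ℕ := Equiv.swap i (i + 1)

/-- The permutation given by a word (product of simple reflections, composed as functions). -/
def wordProd (s : List ℕ) : Equiv.Perm ℕ := (s.map sigmaT).prod

/-- `s` is a word for `w` in `S_n`: all letters lie in `{1,…,n-1}` and the product is `w`. -/
def IsWord (n : ℕ) (w : Equiv.Perm ℕ) (s : List ℕ) : Prop :=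
  (∀ j ∈ s, 1 ≤ j ∧ j ≤ n - 1) ∧ wordProd s = w

/-- `s` is a reduced word for `w`: a word of minimal length. -/
def IsReducedWord (n : ℕ) (w : Equiv.Perm ℕ) (s : List ℕ) : Prop :=
  IsWord n w s ∧ ∀ t : List ℕ, IsWord n w t → s.length ≤ t.length

/-- The Coxeter length `ℓ(w)`. -/
noncomputable def ell (n : ℕ) (w : Equiv.Perm ℕ) : ℕ :=
  sInf {k | ∃ s : List ℕ, IsWord n w s ∧ s.length = k}

/-- The support of `w`: letters appearing in reduced words of `w`. -/
def supp (n : ℕ) (w : Equiv.Perm ℕ) : Set ℕ :=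
  {i | ∃ s : List ℕ, IsReducedWord n w s ∧ i ∈ s}

/-- Bruhat order: some reduced word of `v` is a subsequence of some reduced word of `w`. -/
def BruhatLE (n : ℕ) (v w : Equiv.Perm ℕ) : Prop :=
  ∃ s t : List ℕ, IsReducedWord n v s ∧ IsReducedWord n w t ∧ s.Sublist t

/-- The principal order ideal `B(w)`, as a type. -/
def IdealB (n : ℕ) (w : Equiv.Perm ℕ) : Type := {v : Equiv.Perm ℕ // BruhatLE n v w}

/-- The Bruhat order restricted to `B(w)`. -/
def IdealLE (n : ℕ) (w : Equiv.Perm ℕ) (a b : IdealB n w) : Prop := BruhatLE n a.1 b.1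

/-- Two relations are isomorphic (order isomorphism of the corresponding ordered sets). -/
def RelIsomorphic {α β : Type*} (ra : α → α → Prop) (rb : β → β → Prop) : Prop :=
  ∃ e : α ≃ β, ∀ a b : α, ra a b ↔ rb (e a) (e b)

/-- `w` is a prism: `B(w) ≅ C₂ × X` for some partially ordered set `X`
(the two-element chain `C₂` realized as `Bool`), with the componentwise order. -/
def IsPrism (n : ℕ) (w : Equiv.Perm ℕ) : Prop :=
  ∃ (X : Type) (rX : X → X → Prop), IsPartialOrder X rX ∧
    RelIsomorphic (IdealLE n w)
      (fun p q : Bool × X => (p.1 ≤ q.1) ∧ rX p.2 q.2)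

/-- `w` belongs to `S_n`: it fixes every point outside `{1,…,n}`. -/
def MemSymm (n : ℕ) (w : Equiv.Perm ℕ) : Prop :=
  ∀ x : ℕ, x ∉ Set.Icc 1 n → w x = x

/-- `i` is unconfined in the word `s`: it appears exactly once, not between two copies
of `i+1` and not between two copies of `i-1`. -/
def Unconfined (i : ℕ) (s : List ℕ) : Prop :=
  s.count i = 1 ∧ ∀ a b : List ℕ, s = a ++ i :: b →
    ¬((i + 1) ∈ a ∧ (i + 1) ∈ b) ∧ ¬((i - 1) ∈ a ∧ (i - 1) ∈ b)

/-- `B(w) ≅ C₂ × B(v)` with the componentwise order. -/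
def IsoC2TimesIdeal (n : ℕ) (w v : Equiv.Perm ℕ) : Prop :=
  RelIsomorphic (IdealLE n w)
    (fun p q : Bool × IdealB n v => (p.1 ≤ q.1) ∧ IdealLE n v p.2 q.2)

theorem List.Sublist.count_add_length_le {α : Type*} [DecidableEq α] {r s : List α} {a : α}
    (h : r.Sublist s) (ha : a ∉ r) : s.count a + r.length ≤ s.length := by
  have hr : r.Sublist (s.filter (· ≠ a)) := by
    have hfix : r.filter (· ≠ a) = r :=
      List.filter_eq_self.2 fun x hx => decide_eq_true (ne_of_mem_of_not_mem hx ha)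
    exact hfix ▸ h.filter _
  have := hr.length_le
  rw [List.length_eq_countP_add_countP (· == a) (l := s), List.countP_eq_length_filter,
    List.countP_eq_length_filter, List.count_eq_length_filter]
  simpa using this

theorem Equiv.Perm.eq_one_of_forall_apply_le {g : Equiv.Perm ℕ} (h : ∀ x, g x ≤ x) : g = 1 := by
  ext x
  induction x using Nat.strong_induction_on with
  | _ x ih =>
    by_contra hne
    have hlt : g x < x := lt_of_le_of_ne (h x) hne
    exact hne (g.injective (ih _ hlt))

section Grading

variable {α : Type*} [PartialOrder α]

def IsRank (r : α → ℕ) : Prop := StrictMono r ∧ ∀ a, ∀ k < r a, ∃ b < a, r b = k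

theorem IsRank.height_eq {r : α → ℕ} (h : IsRank r) (a : α) : Order.height a = r a := by
  rw [Order.height_eq_of_strictMono r h.1 h.2 a, Order.height_nat]

theorem IsRank.bool_prod {r : α → ℕ} (h : IsRank r) :
    IsRank fun p : Bool × α => p.1.toNat + r p.2 := by
  refine ⟨fun ⟨b, x⟩ ⟨c, y⟩ hlt => ?_, fun ⟨b, y⟩ k hk => ?_⟩
  · rcases Prod.lt_iff.1 hlt with ⟨hbc, hxy⟩ | ⟨hbc, hxy⟩ <;> dsimp only at hbc hxy ⊢
    · have : b.toNat < c.toNat := by revert hbc; cases b <;> cases c <;> decide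
      have := h.1.monotone hxy
      omega
    · have := Bool.toNat_le_toNat hbc
      have := h.1 hxy
      omega
  · rcases lt_or_ge k (r y) with hky | hky
    · obtain ⟨y', hy', rfl⟩ := h.2 y k hky
      exact ⟨(false, y'), Prod.lt_iff.2 (Or.inr ⟨Bool.false_le b, hy'⟩), by simp⟩
    · cases b
      · simp at hk
        omega
      · refine ⟨(false, y), Prod.lt_iff.2 (Or.inl ⟨Bool.false_lt_true, le_rfl⟩), ?_⟩
        simp at hk ⊢
        omega

end Grading

section SimpleTranspositions

theorem sigmaT_apply (j x : ℕ) :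
    sigmaT j x = if x = j then j + 1 else if x = j + 1 then j else x := by
  simp [sigmaT, Equiv.swap_apply_def]

theorem sigmaT_apply_of_ne {j x : ℕ} (h1 : x ≠ j) (h2 : x ≠ j + 1) : sigmaT j x = x := by
  simp [sigmaT_apply, h1, h2]

@[simp] theorem sigmaT_apply_self (j : ℕ) : sigmaT j j = j + 1 := by simp [sigmaT_apply]

@[simp] theorem sigmaT_apply_succ (j : ℕ) : sigmaT j (j + 1) = j := by simp [sigmaT_apply]

@[simp] theorem sigmaT_sigmaT (j x : ℕ) : sigmaT j (sigmaT j x) = x :=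
  Equiv.swap_apply_self _ _ _

@[simp] theorem sigmaT_mul_self (j : ℕ) : sigmaT j * sigmaT j = 1 := Equiv.swap_mul_self _ _

@[simp] theorem mul_sigmaT_mul_sigmaT (g : Equiv.Perm ℕ) (j : ℕ) :
    g * sigmaT j * sigmaT j = g := by
  rw [mul_assoc, sigmaT_mul_self, mul_one]

theorem sigmaT_injective : Function.Injective sigmaT := fun m j h => by
  have := congrArg (· m) h
  simp only [sigmaT_apply_self, sigmaT_apply] at this
  split_ifs at this <;> omega

theorem sigmaT_comm_of_far {a b : ℕ} (h : a + 2 ≤ b ∨ b + 2 ≤ a) :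
    sigmaT a * sigmaT b = sigmaT b * sigmaT a := by
  ext x
  simp only [Equiv.Perm.mul_apply, sigmaT_apply]
  split_ifs <;> omega

theorem sigmaT_braid_succ (a : ℕ) :
    sigmaT a * sigmaT (a + 1) * sigmaT a = sigmaT (a + 1) * sigmaT a * sigmaT (a + 1) := by
  ext x
  simp only [Equiv.Perm.mul_apply]
  obtain rfl | rfl | rfl | h :
      x = a ∨ x = a + 1 ∨ x = a + 2 ∨ (x ≠ a ∧ x ≠ a + 1 ∧ x ≠ a + 2) := by omega
  all_goals simp (disch := omega) [sigmaT_apply_of_ne]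

@[simp] theorem wordProd_nil : wordProd [] = 1 := rfl

@[simp] theorem wordProd_cons (j : ℕ) (s : List ℕ) :
    wordProd (j :: s) = sigmaT j * wordProd s := by
  simp [wordProd]

@[simp] theorem wordProd_append (s t : List ℕ) : wordProd (s ++ t) = wordProd s * wordProd t := by
  simp [wordProd]

theorem memSymm_mul_sigmaT {n j : ℕ} {g : Equiv.Perm ℕ} (hg : MemSymm n g) (hj1 : 1 ≤ j)
    (hj2 : j ≤ n - 1) : MemSymm n (g * sigmaT j) := by
  intro x hx
  simp only [Set.mem_Icc, not_and_or, not_le] at hx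
  rw [Equiv.Perm.mul_apply, sigmaT_apply_of_ne (by omega) (by omega)]
  exact hg x (by simp only [Set.mem_Icc]; omega)

theorem IsWord.memSymm {n : ℕ} {w : Equiv.Perm ℕ} {s : List ℕ} (h : IsWord n w s) :
    MemSymm n w := by
  obtain ⟨hs, rfl⟩ := h
  induction s using List.reverseRecOn with
  | nil => exact fun _ _ => rfl
  | append_singleton t b ih =>
    have hb := hs b (by simp)
    simpa using memSymm_mul_sigmaT (ih fun j hj => hs j (by simp [hj])) hb.1 hb.2

theorem MemSymm.mapsTo {n : ℕ} {g : Equiv.Perm ℕ} (hg : MemSymm n g) {x : ℕ}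
    (hx : x ∈ Set.Icc 1 n) : g x ∈ Set.Icc 1 n := by
  by_contra h
  exact h (by rwa [g.injective (hg _ h)])

end SimpleTranspositions

section InversionCount

variable {n : ℕ}

def invSet (n : ℕ) (g : Equiv.Perm ℕ) : Finset (ℕ × ℕ) :=
  {p ∈ Finset.Icc 1 n ×ˢ Finset.Icc 1 n | p.1 < p.2 ∧ g p.2 < g p.1}

def invCount (n : ℕ) (g : Equiv.Perm ℕ) : ℕ := (invSet n g).card

theorem mem_invSet {g : Equiv.Perm ℕ} {x y : ℕ} :
    (x, y) ∈ invSet n g ↔ (1 ≤ x ∧ x ≤ n) ∧ (1 ≤ y ∧ y ≤ n) ∧ x < y ∧ g y < g x := by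
  simp [invSet, and_assoc]

@[simp] theorem invCount_one : invCount n 1 = 0 := by
  simp only [invCount, Finset.card_eq_zero, Finset.eq_empty_iff_forall_notMem]
  rintro ⟨x, y⟩
  simp only [mem_invSet, Equiv.Perm.coe_one, id_eq]
  omega

theorem mapsTo_invSet_erase_mul_sigmaT (g : Equiv.Perm ℕ) {j : ℕ} (hj1 : 1 ≤ j)
    (hj2 : j ≤ n - 1) :
    Set.MapsTo (Prod.map (sigmaT j) (sigmaT j)) ((invSet n (g * sigmaT j)).erase (j, j + 1))
      ((invSet n g).erase (j, j + 1)) := by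
  rintro ⟨x, y⟩ hxy
  simp only [Finset.coe_erase, Set.mem_sdiff, Finset.mem_coe, Set.mem_singleton_iff,
    Prod.map_apply, mem_invSet, Equiv.Perm.mul_apply, Prod.mk.injEq] at hxy ⊢
  have hx := sigmaT_apply j x
  have hy := sigmaT_apply j y
  refine ⟨⟨?_, ?_, ?_, hxy.1.2.2.2⟩, ?_⟩ <;> split_ifs at hx hy <;> omega

theorem card_invSet_erase_mul_sigmaT (g : Equiv.Perm ℕ) {j : ℕ} (hj1 : 1 ≤ j)
    (hj2 : j ≤ n - 1) :
    ((invSet n (g * sigmaT j)).erase (j, j + 1)).card = ((invSet n g).erase (j, j + 1)).card :=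
  Finset.card_nbij' _ _ (mapsTo_invSet_erase_mul_sigmaT g hj1 hj2)
    (by simpa using mapsTo_invSet_erase_mul_sigmaT (g * sigmaT j) hj1 hj2)
    (fun _ _ => by simp [Prod.map]) (fun _ _ => by simp [Prod.map])

theorem invCount_mul_sigmaT_of_lt {g : Equiv.Perm ℕ} {j : ℕ} (hj1 : 1 ≤ j) (hj2 : j ≤ n - 1)
    (h : g j < g (j + 1)) : invCount n (g * sigmaT j) = invCount n g + 1 := by
  have hmem : (j, j + 1) ∈ invSet n (g * sigmaT j) := by
    rw [mem_invSet]; simp only [Equiv.Perm.mul_apply, sigmaT_apply_self, sigmaT_apply_succ]; omega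
  have hnot : (j, j + 1) ∉ invSet n g := by rw [mem_invSet]; omega
  rw [invCount, ← Finset.card_erase_add_one hmem, card_invSet_erase_mul_sigmaT g hj1 hj2,
    Finset.erase_eq_of_notMem hnot, invCount]

theorem invCount_mul_sigmaT_of_gt {g : Equiv.Perm ℕ} {j : ℕ} (hj1 : 1 ≤ j) (hj2 : j ≤ n - 1)
    (h : g (j + 1) < g j) : invCount n (g * sigmaT j) + 1 = invCount n g := by
  simpa using (invCount_mul_sigmaT_of_lt (g := g * sigmaT j) hj1 hj2 (by simpa using h)).symm

theorem invCount_mul_sigmaT_le (g : Equiv.Perm ℕ) {j : ℕ} (hj1 : 1 ≤ j) (hj2 : j ≤ n - 1) :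
    invCount n (g * sigmaT j) ≤ invCount n g + 1 := by
  rcases lt_or_gt_of_ne (g.injective.ne (show j ≠ j + 1 by omega)) with h | h
  · rw [invCount_mul_sigmaT_of_lt hj1 hj2 h]
  · have := invCount_mul_sigmaT_of_gt hj1 hj2 h
    omega

theorem invCount_le_length {w : Equiv.Perm ℕ} {s : List ℕ} (hs : IsWord n w s) :
    invCount n w ≤ s.length := by
  obtain ⟨hs, rfl⟩ := hs
  induction s using List.reverseRecOn with
  | nil => simp
  | append_singleton t b ih =>
    have hb := hs b (by simp)
    have := invCount_mul_sigmaT_le (n := n) (wordProd t) hb.1 hb.2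
    have := ih fun j hj => hs j (by simp [hj])
    simp only [wordProd_append, wordProd_cons, wordProd_nil, mul_one, List.length_append,
      List.length_singleton]
    omega

theorem MemSymm.exists_descent {g : Equiv.Perm ℕ} (hg : MemSymm n g) (hne : g ≠ 1) :
    ∃ j, 1 ≤ j ∧ j ≤ n - 1 ∧ g (j + 1) < g j := by
  by_contra! hasc
  refine hne (Equiv.Perm.eq_one_of_forall_apply_le fun x => ?_)
  by_cases hx : x ∈ Set.Icc 1 n
  · rw [Set.mem_Icc] at hx
    have climb : ∀ d, x + d ≤ n → g x + d ≤ g (x + d) := by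
      intro d
      induction d with
      | zero => simp
      | succ d ih =>
        intro hd
        have := hasc (x + d) (by omega) (by omega)
        have := g.injective.ne (show x + d ≠ x + d + 1 by omega)
        have := ih (by omega)
        show g x + (d + 1) ≤ g (x + d + 1)
        omega
    have h1 := climb (n - x) (by omega)
    have h2 := (hg.mapsTo (x := n) (by simp only [Set.mem_Icc]; omega)).2
    rw [show x + (n - x) = n by omega] at h1
    omega
  · exact (hg x hx).le

theorem MemSymm.exists_word_length_eq {g : Equiv.Perm ℕ} (hg : MemSymm n g) :
    ∃ s, IsWord n g s ∧ s.length = invCount n g := by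
  induction hk : invCount n g generalizing g with
  | zero =>
    by_cases hg1 : g = 1
    · exact ⟨[], ⟨by simp, hg1.symm⟩, rfl⟩
    · obtain ⟨j, hj1, hj2, hd⟩ := hg.exists_descent hg1
      have := invCount_mul_sigmaT_of_gt hj1 hj2 hd
      omega
  | succ k ih =>
    by_cases hg1 : g = 1
    · simp [hg1] at hk
    · obtain ⟨j, hj1, hj2, hd⟩ := hg.exists_descent hg1
      have := invCount_mul_sigmaT_of_gt hj1 hj2 hd
      obtain ⟨s, ⟨hs, hsg⟩, hlen⟩ := ih (memSymm_mul_sigmaT hg hj1 hj2) (by omega)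
      refine ⟨s ++ [j], ⟨?_, by simp [hsg]⟩, by simp [hlen]⟩
      simp only [List.mem_append, List.mem_singleton]
      rintro m (hm | rfl)
      exacts [hs m hm, ⟨hj1, hj2⟩]

variable {w : Equiv.Perm ℕ} {s : List ℕ}

theorem isReducedWord_iff (hs : IsWord n w s) :
    IsReducedWord n w s ↔ s.length = invCount n w := by
  refine ⟨fun h => ?_, fun h => ⟨hs, fun t ht => h ▸ invCount_le_length ht⟩⟩
  obtain ⟨t, ht, hlen⟩ := hs.memSymm.exists_word_length_eq
  exact le_antisymm (hlen ▸ h.2 t ht) (invCount_le_length hs)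

theorem IsReducedWord.length_eq (h : IsReducedWord n w s) : s.length = invCount n w :=
  (isReducedWord_iff h.1).1 h

theorem IsReducedWord.prefix {t : List ℕ} (h : IsReducedWord n w (s ++ t)) :
    IsReducedWord n (wordProd s) s := by
  refine ⟨⟨fun j hj => h.1.1 j (by simp [hj]), rfl⟩, fun r hr => ?_⟩
  have := h.2 (r ++ t) ⟨?_, by rw [← h.1.2, wordProd_append, wordProd_append, hr.2]⟩
  · simpa using this
  · simp only [List.mem_append]
    rintro j (hj | hj)
    exacts [hr.1 j hj, h.1.1 j (by simp [hj])]

theorem IsReducedWord.lt_of_concat {b : ℕ} (h : IsReducedWord n w (s ++ [b])) :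
    wordProd s b < wordProd s (b + 1) := by
  have hb := h.1.1 b (by simp)
  by_contra! hd
  have hd := lt_of_le_of_ne hd ((wordProd s).injective.ne (by omega))
  have h1 := invCount_mul_sigmaT_of_gt hb.1 hb.2 hd
  have h2 := invCount_le_length h.prefix.1
  have h3 := h.length_eq
  rw [← h.1.2] at h3
  simp only [wordProd_append, wordProd_cons, wordProd_nil, mul_one, List.length_append,
    List.length_singleton] at h3
  omega

theorem isReducedWord_nil : IsReducedWord n 1 [] := ⟨⟨by simp, rfl⟩, fun _ _ => by simp⟩

theorem invCount_sigmaT {j : ℕ} (hj1 : 1 ≤ j) (hj2 : j ≤ n - 1) : invCount n (sigmaT j) = 1 := by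
  simpa using invCount_mul_sigmaT_of_lt (n := n) (g := 1) hj1 hj2 (by simp)

theorem isReducedWord_singleton {j : ℕ} (hj1 : 1 ≤ j) (hj2 : j ≤ n - 1) :
    IsReducedWord n (sigmaT j) [j] :=
  (isReducedWord_iff ⟨by simp [hj1, hj2], by simp⟩).2 (invCount_sigmaT hj1 hj2).symm

end InversionCount

section RankCriterion

def rankCount (g : Equiv.Perm ℕ) (p q : ℕ) : ℕ := ((Finset.Icc 1 p).filter (q ≤ g ·)).card

def RankLE (a b : Equiv.Perm ℕ) : Prop := ∀ p q, rankCount a p q ≤ rankCount b p q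

theorem RankLE.refl (a : Equiv.Perm ℕ) : RankLE a a := fun _ _ => le_rfl

theorem RankLE.trans {a b c : Equiv.Perm ℕ} (hab : RankLE a b) (hbc : RankLE b c) :
    RankLE a c := fun p q => (hab p q).trans (hbc p q)

theorem rankCount_succ (g : Equiv.Perm ℕ) (p q : ℕ) :
    rankCount g (p + 1) q = rankCount g p q + if q ≤ g (p + 1) then 1 else 0 := by
  rw [rankCount, ← Finset.insert_Icc_right_eq_Icc_add_one (by omega), Finset.filter_insert]
  split_ifs
  · rw [Finset.card_insert_of_notMem (by simp)]; rfl
  · rfl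

theorem rankCount_of_pos (g : Equiv.Perm ℕ) {p : ℕ} (hp : 1 ≤ p) (q : ℕ) :
    rankCount g p q = rankCount g (p - 1) q + if q ≤ g p then 1 else 0 := by
  obtain ⟨k, rfl⟩ : ∃ k, p = k + 1 := ⟨p - 1, by omega⟩
  exact rankCount_succ g k q

theorem rankCount_mul_sigmaT_of_ne (g : Equiv.Perm ℕ) {j p : ℕ} (hj : 1 ≤ j) (hp : p ≠ j)
    (q : ℕ) : rankCount (g * sigmaT j) p q = rankCount g p q := by
  have hmaps : ∀ x ∈ Finset.Icc 1 p, sigmaT j x ∈ Finset.Icc 1 p := fun x hx => by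
    simp only [Finset.mem_Icc] at hx ⊢
    rw [sigmaT_apply]
    split_ifs <;> omega
  unfold rankCount
  refine Finset.card_nbij' (sigmaT j) (sigmaT j) (fun x hx => ?_) (fun x hx => ?_)
    (fun x _ => sigmaT_sigmaT j x) (fun x _ => sigmaT_sigmaT j x)
  · rw [Finset.mem_coe, Finset.mem_filter] at hx ⊢
    exact ⟨hmaps x hx.1, hx.2⟩
  · rw [Finset.mem_coe, Finset.mem_filter] at hx ⊢
    exact ⟨hmaps x hx.1, by simpa using hx.2⟩

theorem rankCount_mul_sigmaT_self (g : Equiv.Perm ℕ) {j : ℕ} (hj : 1 ≤ j) (q : ℕ) :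
    rankCount (g * sigmaT j) j q = rankCount g (j - 1) q + if q ≤ g (j + 1) then 1 else 0 := by
  rw [rankCount_of_pos _ hj, rankCount_mul_sigmaT_of_ne g hj (by omega)]
  simp

variable {a b : Equiv.Perm ℕ} {j : ℕ}

theorem rankLE_mul_sigmaT (hj : 1 ≤ j) (ha : a j < a (j + 1)) : RankLE a (a * sigmaT j) := by
  intro p q
  rcases eq_or_ne p j with rfl | hp
  · rw [rankCount_mul_sigmaT_self a hj, rankCount_of_pos a hj]
    split_ifs <;> omega
  · rw [rankCount_mul_sigmaT_of_ne a hj hp]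

theorem RankLE.mul_sigmaT_of_lt_of_lt (hab : RankLE a b) (hj : 1 ≤ j) (ha : a j < a (j + 1))
    (hb : b j < b (j + 1)) : RankLE (a * sigmaT j) (b * sigmaT j) := by
  intro p q
  rcases eq_or_ne p j with rfl | hp
  · have h0 := hab (p - 1) q
    have h1 := hab p q
    have h2 := hab (p + 1) q
    rw [rankCount_succ, rankCount_succ b, rankCount_of_pos a hj, rankCount_of_pos b hj] at h2
    rw [rankCount_of_pos a hj, rankCount_of_pos b hj] at h1
    rw [rankCount_mul_sigmaT_self a hj, rankCount_mul_sigmaT_self b hj]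
    split_ifs at h1 h2 ⊢ <;> omega
  · rw [rankCount_mul_sigmaT_of_ne a hj hp, rankCount_mul_sigmaT_of_ne b hj hp]
    exact hab p q

theorem RankLE.mul_sigmaT_of_gt_of_gt (hab : RankLE a b) (hj : 1 ≤ j) (ha : a (j + 1) < a j)
    (hb : b (j + 1) < b j) : RankLE (a * sigmaT j) (b * sigmaT j) := by
  intro p q
  rcases eq_or_ne p j with rfl | hp
  · have h0 := hab (p - 1) q
    have h2 := hab (p + 1) q
    rw [rankCount_succ, rankCount_succ b, rankCount_of_pos a hj, rankCount_of_pos b hj] at h2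
    rw [rankCount_mul_sigmaT_self a hj, rankCount_mul_sigmaT_self b hj]
    split_ifs at h2 ⊢ <;> omega
  · rw [rankCount_mul_sigmaT_of_ne a hj hp, rankCount_mul_sigmaT_of_ne b hj hp]
    exact hab p q

theorem RankLE.le_mul_sigmaT (hab : RankLE a b) (hj : 1 ≤ j) (ha : a j < a (j + 1))
    (hb : b (j + 1) < b j) : RankLE a (b * sigmaT j) := by
  intro p q
  rcases eq_or_ne p j with rfl | hp
  · have h0 := hab (p - 1) q
    have h1 := hab p q
    have h2 := hab (p + 1) q
    rw [rankCount_succ, rankCount_succ b, rankCount_of_pos a hj, rankCount_of_pos b hj] at h2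
    rw [rankCount_of_pos a hj, rankCount_of_pos b hj] at h1
    rw [rankCount_mul_sigmaT_self b hj, rankCount_of_pos a hj]
    split_ifs at h1 h2 ⊢ <;> omega
  · rw [rankCount_mul_sigmaT_of_ne b hj hp]
    exact hab p q

theorem MemSymm.eq_one_of_rankLE_one {n : ℕ} {z : Equiv.Perm ℕ} (hz : MemSymm n z)
    (h : RankLE z 1) : z = 1 := by
  refine Equiv.Perm.eq_one_of_forall_apply_le fun x => ?_
  rcases Nat.eq_zero_or_pos x with rfl | hx
  · exact (hz 0 (by simp)).le
  · by_contra! hlt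
    have h1 : rankCount 1 x (x + 1) = 0 := by
      simp only [rankCount, Finset.card_eq_zero, Finset.filter_eq_empty_iff, Finset.mem_Icc]
      intro y hy
      simp only [Equiv.Perm.coe_one, id_eq]
      omega
    have h2 : 0 < rankCount z x (x + 1) :=
      Finset.card_pos.2 ⟨x, by simp only [Finset.mem_filter, Finset.mem_Icc]; omega⟩
    have := h x (x + 1)
    omega

end RankCriterion

section Subwords

variable {n : ℕ}

theorem IsReducedWord.of_concat {w : Equiv.Perm ℕ} {t : List ℕ} {b : ℕ}
    (h : IsReducedWord n w (t ++ [b])) :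
    IsReducedWord n (wordProd t) t ∧ wordProd t b < wordProd t (b + 1) ∧
      w = wordProd t * sigmaT b ∧ 1 ≤ b ∧ b ≤ n - 1 :=
  ⟨h.prefix, h.lt_of_concat, by simp [← h.1.2], h.1.1 b (by simp)⟩

theorem rankLE_of_sublist {w : Equiv.Perm ℕ} {r t : List ℕ} (ht : IsReducedWord n w t)
    (hr : r.Sublist t) : RankLE (wordProd r) w := by
  induction t using List.reverseRecOn generalizing w r with
  | nil =>
    obtain rfl := List.sublist_nil.1 hr
    rw [← ht.1.2]
    exact RankLE.refl 1
  | append_singleton t b ih =>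
    obtain ⟨ht', hasc, rfl, hb, -⟩ := ht.of_concat
    have hstep := rankLE_mul_sigmaT hb hasc
    obtain ⟨r, r', rfl, hr, hr'⟩ := List.sublist_append_iff.1 hr
    have hrt := ih ht' hr
    rcases List.sublist_singleton.1 hr' with rfl | rfl
    · simpa using hrt.trans hstep
    · rw [wordProd_append, wordProd_cons, wordProd_nil, mul_one]
      rcases lt_or_gt_of_ne ((wordProd r).injective.ne (show b ≠ b + 1 by omega)) with h | h
      · exact hrt.mul_sigmaT_of_lt_of_lt hb h hasc
      · have hdown := rankLE_mul_sigmaT (a := wordProd r * sigmaT b) hb (by simpa using h)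
        rw [mul_sigmaT_mul_sigmaT] at hdown
        exact hdown.trans (hrt.trans hstep)

theorem exists_reduced_sublist_of_rankLE {z w : Equiv.Perm ℕ} {t : List ℕ} (hz : MemSymm n z)
    (h : RankLE z w) (ht : IsReducedWord n w t) : ∃ r, IsReducedWord n z r ∧ r.Sublist t := by
  induction t using List.reverseRecOn generalizing z w with
  | nil =>
    rw [← ht.1.2] at h
    exact ⟨[], hz.eq_one_of_rankLE_one h ▸ isReducedWord_nil, List.nil_sublist _⟩
  | append_singleton t b ih =>
    obtain ⟨ht', hasc, rfl, hb1, hb2⟩ := ht.of_concat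
    have hdesc : (wordProd t * sigmaT b) (b + 1) < (wordProd t * sigmaT b) b := by simpa using hasc
    rcases lt_or_gt_of_ne (z.injective.ne (show b ≠ b + 1 by omega)) with hz' | hz'
    · obtain ⟨r, hr, hsub⟩ := ih hz (by simpa using h.le_mul_sigmaT hb1 hz' hdesc) ht'
      exact ⟨r, hr, hsub.trans (List.sublist_append_left t [b])⟩
    · obtain ⟨r, hr, hsub⟩ := ih (memSymm_mul_sigmaT hz hb1 hb2)
        (by simpa using h.mul_sigmaT_of_gt_of_gt hb1 hz' hdesc) ht'
      refine ⟨r ++ [b], ?_, hsub.append (List.Sublist.refl [b])⟩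
      have hword : IsWord n z (r ++ [b]) := ⟨by
        simp only [List.mem_append, List.mem_singleton]
        rintro m (hm | rfl)
        exacts [hr.1.1 m hm, ⟨hb1, hb2⟩], by simp [hr.1.2]⟩
      rw [isReducedWord_iff hword, List.length_append, hr.length_eq]
      exact invCount_mul_sigmaT_of_gt hb1 hb2 hz'

end Subwords

section Bruhat

variable {n : ℕ} {a b c z w : Equiv.Perm ℕ}

theorem BruhatLE.rankLE (h : BruhatLE n z w) : RankLE z w := by
  obtain ⟨r, t, hr, ht, hsub⟩ := h
  exact hr.1.2 ▸ rankLE_of_sublist ht hsub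

theorem BruhatLE.exists_reduced_left (h : BruhatLE n z w) : ∃ r, IsReducedWord n z r :=
  let ⟨r, _, hr, _⟩ := h; ⟨r, hr⟩

theorem BruhatLE.exists_reduced_right (h : BruhatLE n z w) : ∃ t, IsReducedWord n w t :=
  let ⟨_, t, _, ht, _⟩ := h; ⟨t, ht⟩

theorem BruhatLE.exists_sublist {t : List ℕ} (h : BruhatLE n z w) (ht : IsReducedWord n w t) :
    ∃ r, IsReducedWord n z r ∧ r.Sublist t := by
  obtain ⟨r, hr⟩ := h.exists_reduced_left
  exact exists_reduced_sublist_of_rankLE hr.1.memSymm h.rankLE ht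

theorem BruhatLE.trans (hab : BruhatLE n a b) (hbc : BruhatLE n b c) : BruhatLE n a c := by
  obtain ⟨t, ht⟩ := hbc.exists_reduced_right
  obtain ⟨r, hr⟩ := hab.exists_reduced_left
  obtain ⟨r', hr', hsub⟩ :=
    exists_reduced_sublist_of_rankLE hr.1.memSymm (hab.rankLE.trans hbc.rankLE) ht
  exact ⟨r', t, hr', ht, hsub⟩

theorem bruhatLE_refl {t : List ℕ} (ht : IsReducedWord n w t) : BruhatLE n w w :=
  ⟨t, t, ht, ht, List.Sublist.refl t⟩

theorem BruhatLE.invCount_le (h : BruhatLE n z w) : invCount n z ≤ invCount n w := by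
  obtain ⟨r, t, hr, ht, hsub⟩ := h
  simpa [hr.length_eq, ht.length_eq] using hsub.length_le

theorem BruhatLE.eq_of_invCount_le (h : BruhatLE n z w) (hl : invCount n w ≤ invCount n z) :
    z = w := by
  have hle := h.invCount_le
  obtain ⟨r, t, hr, ht, hsub⟩ := h
  rw [← hr.1.2, ← ht.1.2, hsub.eq_of_length (by rw [hr.length_eq, ht.length_eq]; omega)]

theorem BruhatLE.antisymm (hzw : BruhatLE n z w) (hwz : BruhatLE n w z) : z = w :=
  hzw.eq_of_invCount_le hwz.invCount_le

theorem BruhatLE.invCount_lt (h : BruhatLE n z w) (hne : z ≠ w) : invCount n z < invCount n w :=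
  lt_of_le_of_ne h.invCount_le fun hl => hne (h.eq_of_invCount_le hl.ge)

theorem one_bruhatLE {t : List ℕ} (ht : IsReducedWord n w t) : BruhatLE n 1 w :=
  ⟨[], t, isReducedWord_nil, ht, List.nil_sublist t⟩

theorem MemSymm.bounds_of_sigmaT {j : ℕ} (h : MemSymm n (sigmaT j)) : 1 ≤ j ∧ j ≤ n - 1 := by
  have h1 : j ∈ Set.Icc 1 n := by_contra fun hj => by simpa using h j hj
  have h2 : j + 1 ∈ Set.Icc 1 n := by_contra fun hj => by simpa using h (j + 1) hj
  simp only [Set.mem_Icc] at h1 h2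
  omega

theorem mem_of_sigmaT_bruhatLE {j : ℕ} {t : List ℕ} (h : BruhatLE n (sigmaT j) w)
    (ht : IsReducedWord n w t) : j ∈ t := by
  obtain ⟨r, hr, hsub⟩ := h.exists_sublist ht
  have hj := hr.1.memSymm.bounds_of_sigmaT
  match r, hr.length_eq.trans (invCount_sigmaT hj.1 hj.2) with
  | [m], _ =>
    obtain rfl : m = j := sigmaT_injective (by simpa using hr.1.2)
    exact hsub.subset (List.mem_singleton_self m)

theorem sigmaT_bruhatLE_of_mem {j : ℕ} {t : List ℕ} (ht : IsReducedWord n w t) (hj : j ∈ t) :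
    BruhatLE n (sigmaT j) w :=
  ⟨[j], t, isReducedWord_singleton (ht.1.1 j hj).1 (ht.1.1 j hj).2, ht,
    List.singleton_sublist.2 hj⟩

theorem sigmaT_bruhatLE_of_mem_supp {j : ℕ} (h : j ∈ supp n w) : BruhatLE n (sigmaT j) w :=
  let ⟨_, ht, hj⟩ := h; sigmaT_bruhatLE_of_mem ht hj

theorem mem_supp_iff {j : ℕ} {t : List ℕ} (ht : IsReducedWord n w t) : j ∈ supp n w ↔ j ∈ t :=
  ⟨fun ⟨_, hs, hj⟩ => mem_of_sigmaT_bruhatLE (sigmaT_bruhatLE_of_mem hs hj) ht,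
    fun hj => ⟨t, ht, hj⟩⟩

theorem sigmaT_bruhatLE_iff {j : ℕ} {t : List ℕ} (ht : IsReducedWord n w t) :
    BruhatLE n (sigmaT j) w ↔ j ∈ supp n w :=
  ⟨fun h => (mem_supp_iff ht).2 (mem_of_sigmaT_bruhatLE h ht),
    fun hj => sigmaT_bruhatLE_of_mem ht ((mem_supp_iff ht).1 hj)⟩

theorem BruhatLE.supp_subset (h : BruhatLE n z w) : supp n z ⊆ supp n w := by
  obtain ⟨r, hr⟩ := h.exists_reduced_left
  obtain ⟨t, ht⟩ := h.exists_reduced_right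
  intro j hj
  exact (sigmaT_bruhatLE_iff ht).1 (((sigmaT_bruhatLE_iff hr).2 hj).trans h)

theorem supp_bounds {j : ℕ} (h : j ∈ supp n w) : 1 ≤ j ∧ j ≤ n - 1 :=
  let ⟨_, ht, hj⟩ := h; ht.1.1 j hj

theorem supp_finite {t : List ℕ} (ht : IsReducedWord n w t) : (supp n w).Finite :=
  t.finite_toSet.subset fun _ hj => (mem_supp_iff ht).1 hj

end Bruhat

section ShortElements

variable {n : ℕ} {y : Equiv.Perm ℕ} {t : List ℕ}

theorem IsReducedWord.eq_one (ht : IsReducedWord n y t) (h : invCount n y = 0) : y = 1 := by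
  rw [← ht.1.2, List.eq_nil_of_length_eq_zero (ht.length_eq.trans h), wordProd_nil]

theorem IsReducedWord.exists_eq_sigmaT (ht : IsReducedWord n y t) (h : invCount n y = 1) :
    ∃ m ∈ supp n y, y = sigmaT m := by
  match t, ht.length_eq.trans h, ht with
  | [m], _, ht => exact ⟨m, (mem_supp_iff ht).2 (List.mem_singleton_self m), by simp [← ht.1.2]⟩

theorem not_isReducedWord_append_cons_cons (s : List ℕ) (j : ℕ) :
    ¬ IsReducedWord n y (s ++ j :: j :: t) := fun h => by
  have := h.2 (s ++ t) ⟨fun m hm => h.1.1 m (by simp at hm ⊢; tauto), by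
    rw [← h.1.2]; simp [← mul_assoc]⟩
  simp at this

theorem IsReducedWord.ncard_supp_eq_two (ht : IsReducedWord n y t) (h : invCount n y = 2) :
    (supp n y).ncard = 2 := by
  match t, ht.length_eq.trans h, ht with
  | [p, q], _, ht =>
    have hpq : p ≠ q := by
      rintro rfl
      exact not_isReducedWord_append_cons_cons [] p ht
    rw [← Set.ncard_pair hpq]
    congr 1
    ext j
    simp [mem_supp_iff ht]

def Adjacent (a b : ℕ) : Prop := b = a + 1 ∨ a = b + 1

theorem Adjacent.symm {a b : ℕ} (h : Adjacent a b) : Adjacent b a := Or.symm h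

def braidElt (a b : ℕ) : Equiv.Perm ℕ := sigmaT a * sigmaT b * sigmaT a

theorem braidElt_comm {a b : ℕ} (h : Adjacent a b) : braidElt a b = braidElt b a := by
  rcases h with rfl | rfl
  exacts [sigmaT_braid_succ a, (sigmaT_braid_succ b).symm]

theorem wordProd_triple (a b : ℕ) : wordProd [a, b, a] = braidElt a b := by
  simp [braidElt, mul_assoc]

theorem invCount_braidElt {a b : ℕ} (h : Adjacent a b) (ha1 : 1 ≤ a) (ha2 : a ≤ n - 1)
    (hb1 : 1 ≤ b) (hb2 : b ≤ n - 1) : invCount n (braidElt a b) = 3 := by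
  have hab : (sigmaT a) b < (sigmaT a) (b + 1) := by
    rcases h with rfl | rfl <;> simp (disch := omega) [sigmaT_apply_of_ne]
  have haba : (sigmaT a * sigmaT b) a < (sigmaT a * sigmaT b) (a + 1) := by
    rcases h with rfl | rfl <;> simp (disch := omega) [sigmaT_apply_of_ne]
  rw [braidElt, invCount_mul_sigmaT_of_lt ha1 ha2 haba, invCount_mul_sigmaT_of_lt hb1 hb2 hab,
    invCount_sigmaT ha1 ha2]

theorem isReducedWord_braidElt {a b : ℕ} (h : Adjacent a b) (ha1 : 1 ≤ a) (ha2 : a ≤ n - 1)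
    (hb1 : 1 ≤ b) (hb2 : b ≤ n - 1) : IsReducedWord n (braidElt a b) [a, b, a] := by
  rw [isReducedWord_iff ⟨by simp [*], wordProd_triple a b⟩, invCount_braidElt h ha1 ha2 hb1 hb2]
  rfl

theorem supp_braidElt {a b : ℕ} (h : Adjacent a b) (ha1 : 1 ≤ a) (ha2 : a ≤ n - 1)
    (hb1 : 1 ≤ b) (hb2 : b ≤ n - 1) : supp n (braidElt a b) = {a, b} := by
  ext j
  simp [mem_supp_iff (isReducedWord_braidElt h ha1 ha2 hb1 hb2), or_comm]

theorem IsReducedWord.eq_braidElt {a b : ℕ} (ht : IsReducedWord n y t) (hlen : t.length = 3)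
    (hsupp : supp n y ⊆ {a, b}) : Adjacent a b ∧ y = braidElt a b := by
  match t, hlen, ht with
  | [x, u, x'], _, ht =>
    have hx : ∀ m ∈ [x, u, x'], m = a ∨ m = b := fun m hm => hsupp ((mem_supp_iff ht).2 hm)
    have hxu : x ≠ u := by
      rintro rfl
      exact not_isReducedWord_append_cons_cons [] x ht
    have hux' : u ≠ x' := by
      rintro rfl
      exact not_isReducedWord_append_cons_cons [x] u ht
    obtain rfl : x = x' := by
      rcases hx x (by simp) with h1 | h1 <;> rcases hx u (by simp) with h2 | h2 <;>
        rcases hx x' (by simp) with h3 | h3 <;> omega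
    have hy : y = braidElt x u := by rw [← ht.1.2, wordProd_triple]
    have hadj : Adjacent x u := by
      by_contra hfar
      have hcomm := sigmaT_comm_of_far (a := x) (b := u) (by unfold Adjacent at hfar; omega)
      have := ht.2 [u] ⟨fun m hm => ht.1.1 m (by simp_all), by
        rw [hy, braidElt, hcomm, mul_assoc, sigmaT_mul_self, mul_one]; simp⟩
      simp at this
    rcases hx x (by simp) with rfl | rfl <;> rcases hx u (by simp) with rfl | rfl
    · exact absurd rfl hxu
    · exact ⟨hadj, hy⟩
    · exact ⟨hadj.symm, hy.trans (braidElt_comm hadj)⟩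
    · exact absurd rfl hxu

theorem IsReducedWord.eq_braidElt_of_ncard_supp {a b : ℕ} (ht : IsReducedWord n y t)
    (h3 : invCount n y = 3) (h2 : (supp n y).ncard = 2) (ha : a ∈ supp n y) (hb : b ∈ supp n y)
    (hab : a ≠ b) : Adjacent a b ∧ y = braidElt a b := by
  have hsupp : {a, b} = supp n y :=
    Set.eq_of_subset_of_ncard_le (Set.insert_subset ha (Set.singleton_subset_iff.2 hb))
      (by rw [h2, Set.ncard_pair hab]) (supp_finite ht)
  exact ht.eq_braidElt (ht.length_eq.trans h3) hsupp.ge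

end ShortElements

section Ideal

variable {n : ℕ} {w v : Equiv.Perm ℕ}

theorem IdealB.exists_reduced (a : IdealB n w) : ∃ r, IsReducedWord n a.1 r :=
  a.2.exists_reduced_left

instance (n : ℕ) (w : Equiv.Perm ℕ) : PartialOrder (IdealB n w) where
  le := IdealLE n w
  le_refl a := let ⟨_, hr⟩ := a.exists_reduced; bruhatLE_refl hr
  le_trans _ _ _ := BruhatLE.trans
  le_antisymm _ _ hab hba := Subtype.ext (hab.antisymm hba)

theorem IdealB.le_iff {a b : IdealB n w} : a ≤ b ↔ BruhatLE n a.1 b.1 := Iff.rfl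

theorem IsoC2TimesIdeal.nonempty_orderIso (h : IsoC2TimesIdeal n w v) :
    Nonempty (IdealB n w ≃o Bool × IdealB n v) :=
  let ⟨e, he⟩ := h; ⟨⟨e, fun {a b} => (he a b).symm⟩⟩

theorem isRank_invCount : IsRank fun a : IdealB n w => invCount n a.1 := by
  refine ⟨fun a b hab => hab.le.invCount_lt fun h => hab.ne (Subtype.ext h), fun a k hk => ?_⟩
  replace hk : k < invCount n a.1 := hk
  obtain ⟨t, ht⟩ := a.exists_reduced
  have hpre : IsReducedWord n (wordProd (t.take k)) (t.take k) :=
    (show IsReducedWord n a.1 (t.take k ++ t.drop k) by rwa [List.take_append_drop]).prefix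
  have hlen : invCount n (wordProd (t.take k)) = k := by
    rw [← hpre.length_eq, List.length_take, ht.length_eq]; omega
  have hle : BruhatLE n (wordProd (t.take k)) a.1 := ⟨_, t, hpre, ht, List.take_sublist k t⟩
  exact ⟨⟨_, hle.trans a.2⟩, lt_of_le_of_ne hle fun h => hk.ne (by rw [← h]; exact hlen.symm), hlen⟩

variable (e : IdealB n w ≃o Bool × IdealB n v)

theorem invCount_eq_of_orderIso (z : IdealB n w) :
    invCount n z.1 = (e z).1.toNat + invCount n (e z).2.1 := by
  have h := isRank_invCount.bool_prod.height_eq (e z)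
  rw [Order.height_orderIso, isRank_invCount.height_eq] at h
  exact_mod_cast h

theorem orderIso_apply_top (hw : BruhatLE n w w) (hv : BruhatLE n v v) :
    e ⟨w, hw⟩ = (true, ⟨v, hv⟩) :=
  le_antisymm (Prod.le_def.2 ⟨Bool.le_true _, (e ⟨w, hw⟩).2.2⟩)
    (e.symm_apply_le.1 (e.symm (true, ⟨v, hv⟩)).2)

theorem nonempty_orderIso_of_apply_eq {z : IdealB n w} {x : IdealB n v} (hz : e z = (true, x)) :
    Nonempty (IdealB n z.1 ≃o Bool × IdealB n x.1) := by
  let up : IdealB n z.1 → IdealB n w := fun a => ⟨a.1, a.2.trans z.2⟩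
  have hup (a : IdealB n z.1) : (e (up a)).2 ≤ x := by
    have : e (up a) ≤ e z := e.le_iff_le.2 a.2
    exact (hz ▸ this).2
  let down : Bool × IdealB n x.1 → IdealB n w := fun p => e.symm (p.1, ⟨p.2.1, p.2.2.trans x.2⟩)
  have hdown (p : Bool × IdealB n x.1) : down p ≤ z :=
    e.symm_apply_le.2 (hz ▸ ⟨Bool.le_true _, p.2.2⟩)
  refine ⟨⟨⟨fun a => ((e (up a)).1, ⟨(e (up a)).2.1, hup a⟩),
    fun p => ⟨(down p).1, hdown p⟩, fun a => ?_, fun p => ?_⟩, fun {a b} => ?_⟩⟩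
  · apply Subtype.ext
    change (e.symm (e (up a))).1 = a.1
    rw [e.symm_apply_apply]
  · change ((e (down p)).1, (⟨(e (down p)).2.1, _⟩ : IdealB n x.1)) = p
    simp only [down, e.apply_symm_apply]
    rfl
  · change e (up a) ≤ e (up b) ↔ a ≤ b
    exact e.le_iff_le

def IdealB.atoms (z : IdealB n w) : Set (IdealB n w) := {a | a ≤ z ∧ invCount n a.1 = 1}

theorem IdealB.image_val_atoms (z : IdealB n w) :
    (fun a : IdealB n w => a.1) '' z.atoms = sigmaT '' supp n z.1 := by
  ext g
  constructor
  · rintro ⟨a, ⟨ha, h1⟩, rfl⟩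
    obtain ⟨r, hr⟩ := a.exists_reduced
    obtain ⟨m, hm, hma⟩ := hr.exists_eq_sigmaT h1
    exact ⟨m, IdealB.le_iff.1 ha |>.supp_subset (hma ▸ hm), hma.symm⟩
  · rintro ⟨j, hj, rfl⟩
    have hb := supp_bounds hj
    exact ⟨⟨sigmaT j, (sigmaT_bruhatLE_of_mem_supp hj).trans z.2⟩,
      ⟨sigmaT_bruhatLE_of_mem_supp hj, invCount_sigmaT hb.1 hb.2⟩, rfl⟩

theorem IdealB.ncard_supp_eq_ncard_atoms (z : IdealB n w) :
    (supp n z.1).ncard = z.atoms.ncard := by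
  rw [← Set.ncard_image_of_injective _ sigmaT_injective, ← z.image_val_atoms]
  exact Set.ncard_image_of_injective _ fun _ _ => Subtype.ext

theorem IdealB.finite_atoms (z : IdealB n w) : z.atoms.Finite := by
  obtain ⟨t, ht⟩ := z.exists_reduced
  refine Set.Finite.of_finite_image (f := fun a : IdealB n w => a.1) ?_
    fun _ _ _ _ => Subtype.ext
  rw [z.image_val_atoms]
  exact (supp_finite ht).image _

theorem ncard_atoms_eq_of_orderIso (z : IdealB n w) :
    z.atoms.ncard =
      {p : Bool × IdealB n v | p ≤ e z ∧ p.1.toNat + invCount n p.2.1 = 1}.ncard := by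
  refine Set.ncard_congr (fun a _ => e a) (fun a ⟨ha, h1⟩ => ?_)
    (fun a b _ _ h => e.injective h) (fun p ⟨hp, h1⟩ => ⟨e.symm p, ?_, e.apply_symm_apply p⟩)
  · exact ⟨e.le_iff_le.2 ha, (invCount_eq_of_orderIso e a).symm.trans h1⟩
  · refine ⟨e.symm_apply_le.2 hp, ?_⟩
    rw [invCount_eq_of_orderIso e, e.apply_symm_apply, h1]

theorem ncard_atoms_bool_prod (b : Bool) (y : IdealB n v) :
    {p : Bool × IdealB n v | p ≤ (b, y) ∧ p.1.toNat + invCount n p.2.1 = 1}.ncard =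
      b.toNat + y.atoms.ncard := by
  have hlow : {p : Bool × IdealB n v | p ≤ (false, y) ∧ p.1.toNat + invCount n p.2.1 = 1} =
      Prod.mk false '' y.atoms := by
    ext ⟨c, a⟩
    cases c <;> simp [Prod.mk_le_mk, IdealB.atoms]
  obtain ⟨t, ht⟩ := y.exists_reduced
  cases b
  · rw [hlow, Set.ncard_image_of_injective _ (Prod.mk_right_injective false)]
    simp
  · obtain ⟨tv, htv⟩ := y.2.exists_reduced_right
    let bot : IdealB n v := ⟨1, one_bruhatLE htv⟩
    have htop : {p : Bool × IdealB n v | p ≤ (true, y) ∧ p.1.toNat + invCount n p.2.1 = 1} =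
        insert (true, bot) {p | p ≤ (false, y) ∧ p.1.toNat + invCount n p.2.1 = 1} := by
      ext ⟨c, a⟩
      obtain ⟨r, hr⟩ := a.exists_reduced
      cases c
      · simp [Prod.mk_le_mk]
      · simp only [Set.mem_ofPred_eq, Set.mem_insert_iff, Prod.mk.injEq, Prod.mk_le_mk]
        constructor
        · rintro ⟨-, h0⟩
          exact Or.inl ⟨trivial, Subtype.ext (hr.eq_one (by simpa using h0))⟩
        · rintro (⟨-, rfl⟩ | ⟨⟨h, -⟩, -⟩)
          · exact ⟨⟨le_rfl, one_bruhatLE ht⟩, by simp [bot]⟩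
          · exact absurd h (by decide)
    rw [htop, Set.ncard_insert_of_notMem (by simp [Prod.mk_le_mk])
      (hlow ▸ y.finite_atoms.image _), hlow,
      Set.ncard_image_of_injective _ (Prod.mk_right_injective false)]
    simp [add_comm]

theorem ncard_supp_eq_of_orderIso (z : IdealB n w) :
    (supp n z.1).ncard = (e z).1.toNat + (supp n (e z).2.1).ncard := by
  rw [z.ncard_supp_eq_ncard_atoms, ncard_atoms_eq_of_orderIso e,
    (e z).2.ncard_supp_eq_ncard_atoms, ← ncard_atoms_bool_prod]

end Ideal

section Prism

variable {n : ℕ} {w v : Equiv.Perm ℕ}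

theorem MemSymm.bounds_of_braidElt {a b : ℕ} (h : MemSymm n (braidElt a b)) (hab : Adjacent a b) :
    (1 ≤ a ∧ a ≤ n - 1) ∧ 1 ≤ b ∧ b ≤ n - 1 := by
  obtain ⟨m, hm, h1, h2⟩ : ∃ m, (m = a ∧ b = a + 1 ∨ m = b ∧ a = b + 1) ∧
      braidElt a b m ≠ m ∧ braidElt a b (m + 2) ≠ m + 2 := by
    rcases hab with rfl | rfl
    · exact ⟨a, by simp (disch := omega) [braidElt, sigmaT_apply_of_ne]; omega⟩
    · exact ⟨b, by simp (disch := omega) [braidElt, sigmaT_apply_of_ne]; omega⟩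
  have h1 := mt (h m) h1
  have h2 := mt (h (m + 2)) h2
  simp only [Set.mem_Icc, not_not] at h1 h2
  omega

variable (e : IdealB n w ≃o Bool × IdealB n v)

theorem orderIso_apply_fst_eq_false {z : IdealB n w} (h3 : invCount n z.1 = 3)
    (h2 : (supp n z.1).ncard = 2) : (e z).1 = false := by
  by_contra htop
  rw [Bool.not_eq_false] at htop
  have hrank := invCount_eq_of_orderIso e z
  have hcard := ncard_supp_eq_of_orderIso e z
  rw [htop, h3] at hrank
  rw [htop, h2] at hcard
  obtain ⟨r, hr⟩ := (e z).2.exists_reduced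
  have := hr.ncard_supp_eq_two (by simp at hrank; omega)
  simp at hcard
  omega

theorem exists_orderIso_apply_sigmaT {z : IdealB n w} (hz : (e z).1 = false) {j : ℕ}
    (hj : j ∈ supp n z.1) :
    ∃ m ∈ supp n (e z).2.1, (e ⟨sigmaT j, (sigmaT_bruhatLE_of_mem_supp hj).trans z.2⟩).1 = false ∧
      (e ⟨sigmaT j, (sigmaT_bruhatLE_of_mem_supp hj).trans z.2⟩).2.1 = sigmaT m := by
  set a : IdealB n w := ⟨sigmaT j, (sigmaT_bruhatLE_of_mem_supp hj).trans z.2⟩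
  have hle : e a ≤ e z := e.le_iff_le.2 (sigmaT_bruhatLE_of_mem_supp hj)
  have hfst : (e a).1 = false := by
    have := (Prod.le_def.1 hle).1
    rw [hz] at this
    revert this; cases (e a).1 <;> decide
  obtain ⟨r, hr⟩ := (e a).2.exists_reduced
  have hb := supp_bounds hj
  have h1 := invCount_eq_of_orderIso e a
  rw [hfst, invCount_sigmaT hb.1 hb.2] at h1
  obtain ⟨m, hm, hma⟩ := hr.exists_eq_sigmaT (by simpa using h1.symm)
  exact ⟨m, (Prod.le_def.1 hle).2.supp_subset hm, hfst, hma⟩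

theorem orderIso_apply_fst_eq_true {i : ℕ} (hvw : BruhatLE n v w)
    (hsupp : supp n w = supp n v ∪ {i})
    (hi : (e ⟨sigmaT i, sigmaT_bruhatLE_of_mem_supp (hsupp ▸ Or.inr rfl)⟩).1 = false) :
    (e ⟨v, hvw⟩).1 = true := by
  by_contra hv
  rw [Bool.not_eq_true] at hv
  obtain ⟨t, ht⟩ := hvw.exists_reduced_left
  let a := e.symm (true, ⟨1, one_bruhatLE ht⟩)
  have ha : invCount n a.1 = 1 := by
    rw [invCount_eq_of_orderIso, e.apply_symm_apply]
    simp
  obtain ⟨r, hr⟩ := a.exists_reduced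
  obtain ⟨j, hj, hja⟩ := hr.exists_eq_sigmaT ha
  have hjw : j ∈ supp n w := a.2.supp_subset hj
  rw [hsupp] at hjw
  rcases hjw with hjv | rfl
  · have hav : a ≤ ⟨v, hvw⟩ := IdealB.le_iff.2 (hja ▸ (sigmaT_bruhatLE_iff ht).2 hjv)
    have := (e.le_iff_le.2 hav).1
    simp only [a, e.apply_symm_apply, hv] at this
    exact absurd this (by decide)
  · have : a = ⟨sigmaT j, sigmaT_bruhatLE_of_mem_supp (hsupp ▸ Or.inr rfl)⟩ := Subtype.ext hja
    rw [← this] at hi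
    simp [a] at hi

theorem le_of_orderIso_apply_eq {z a : IdealB n w} {x : IdealB n v} (hz : e z = (true, x))
    (ha : BruhatLE n (e a).2.1 x.1) : a ≤ z :=
  e.le_iff_le.1 (hz ▸ Prod.le_def.2 ⟨Bool.le_true _, ha⟩)

theorem orderIso_apply_snd_eq_braidElt {z : IdealB n w} (h3 : invCount n z.1 = 3)
    (h2 : (supp n z.1).ncard = 2) {m m' : ℕ} (hm : m ∈ supp n (e z).2.1)
    (hm' : m' ∈ supp n (e z).2.1) (hmm' : m ≠ m') :
    Adjacent m m' ∧ (e z).2.1 = braidElt m m' := by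
  have hfst := orderIso_apply_fst_eq_false e h3 h2
  obtain ⟨y, hy⟩ := (e z).2.exists_reduced
  have hrank := invCount_eq_of_orderIso e z
  have hcard := ncard_supp_eq_of_orderIso e z
  rw [hfst, h3] at hrank
  rw [hfst, h2] at hcard
  exact hy.eq_braidElt_of_ncard_supp (by simpa using hrank.symm) (by simpa using hcard.symm)
    hm hm' hmm'

theorem supp_eq_union_of_orderIso {z : IdealB n w} {x : IdealB n v} (hz : e z = (true, x))
    (hxz : BruhatLE n x.1 z.1) {m : ℕ} (hmz : m ∈ supp n z.1) (hmx : m ∉ supp n x.1) :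
    supp n z.1 = supp n x.1 ∪ {m} := by
  obtain ⟨t, ht⟩ := z.exists_reduced
  obtain ⟨r, hr⟩ := x.exists_reduced
  have hcard := ncard_supp_eq_of_orderIso e z
  rw [hz] at hcard
  refine (Set.eq_of_subset_of_ncard_le (Set.union_subset hxz.supp_subset
    (Set.singleton_subset_iff.2 hmz)) ?_ (supp_finite ht)).symm
  rw [Set.union_singleton, Set.ncard_insert_of_notMem hmx (supp_finite hr), hcard]
  simp [add_comm]

end Prism

structure IsPrismOver (n : ℕ) (w v : Equiv.Perm ℕ) (i : ℕ) : Prop where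
  bruhatLE : BruhatLE n v w
  not_mem_supp : i ∉ supp n v
  supp_eq : supp n w = supp n v ∪ {i}
  orderIso : Nonempty (IdealB n w ≃o Bool × IdealB n v)

namespace IsPrismOver

variable {n : ℕ} {w v : Equiv.Perm ℕ} {i c : ℕ}

theorem exists_prism_braidElt_le (h : IsPrismOver n w v i) (hic : Adjacent i c)
    (hu : BruhatLE n (braidElt i c) w) :
    ∃ x m m', IsPrismOver n v x m ∧ Adjacent m m' ∧ BruhatLE n (braidElt m m') v := by
  obtain ⟨hvw, hiv, hsupp, ⟨e⟩⟩ := h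
  obtain ⟨r, hr⟩ := hu.exists_reduced_left
  obtain ⟨⟨hi1, hi2⟩, hc1, hc2⟩ := hr.1.memSymm.bounds_of_braidElt hic
  have hsuppu := supp_braidElt hic hi1 hi2 hc1 hc2
  let u : IdealB n w := ⟨braidElt i c, hu⟩
  have hu3 : invCount n u.1 = 3 := invCount_braidElt hic hi1 hi2 hc1 hc2
  have hu2 : (supp n u.1).ncard = 2 := by
    rw [hsuppu, Set.ncard_pair (by unfold Adjacent at hic; omega)]
  have hufst := orderIso_apply_fst_eq_false e hu3 hu2
  have hiu : i ∈ supp n u.1 := by simp [u, hsuppu]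
  have hcu : c ∈ supp n u.1 := by simp [u, hsuppu]
  obtain ⟨m, hm, hifst, hmi⟩ := exists_orderIso_apply_sigmaT e hufst hiu
  obtain ⟨m', hm', hcfst, hmc⟩ := exists_orderIso_apply_sigmaT e hufst hcu
  have hmm' : m ≠ m' := by
    rintro rfl
    have := congrArg Subtype.val (e.injective (Prod.ext (hifst.trans hcfst.symm)
      (Subtype.ext (hmi.trans hmc.symm))))
    unfold Adjacent at hic
    have := sigmaT_injective this
    omega
  obtain ⟨x, hx⟩ : ∃ x, e ⟨v, hvw⟩ = (true, x) :=
    ⟨_, Prod.ext (orderIso_apply_fst_eq_true e hvw hsupp hifst) rfl⟩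
  obtain ⟨t, ht⟩ := hvw.exists_reduced_left
  have hmx : m ∉ supp n x.1 := fun hmx => by
    obtain ⟨tx, htx⟩ := x.exists_reduced
    refine hiv ((sigmaT_bruhatLE_iff ht).1 (le_of_orderIso_apply_eq e
      (a := ⟨sigmaT i, (sigmaT_bruhatLE_of_mem_supp hiu).trans hu⟩) hx ?_))
    rw [hmi]
    exact (sigmaT_bruhatLE_iff htx).2 hmx
  have hmv : m ∈ supp n v := (sigmaT_bruhatLE_iff ht).1 (hmi ▸ (e _).2.2)
  obtain ⟨hadj, hyeq⟩ := orderIso_apply_snd_eq_braidElt e hu3 hu2 hm hm' hmm'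
  exact ⟨x.1, m, m', ⟨x.2, hmx, supp_eq_union_of_orderIso e hx x.2 hmv hmx,
    nonempty_orderIso_of_apply_eq e hx⟩, hadj, hyeq ▸ (e u).2.2⟩

theorem not_braidElt_le (h : IsPrismOver n w v i) (hic : Adjacent i c) :
    ¬ BruhatLE n (braidElt i c) w := by
  induction hk : invCount n w using Nat.strong_induction_on generalizing w v i c with
  | _ k ih =>
    intro hu
    obtain ⟨x, m, m', hvx, hadj, hle⟩ := h.exists_prism_braidElt_le hic hu
    have hvw : v ≠ w := fun hv => h.not_mem_supp (hv ▸ h.supp_eq ▸ Or.inr rfl)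
    exact ih _ (hk ▸ h.bruhatLE.invCount_lt hvw) hvx hadj rfl hle

theorem invCount_eq (h : IsPrismOver n w v i) : invCount n w = invCount n v + 1 := by
  obtain ⟨hvw, -, -, ⟨e⟩⟩ := h
  obtain ⟨t, ht⟩ := hvw.exists_reduced_left
  obtain ⟨s, hs⟩ := hvw.exists_reduced_right
  have := invCount_eq_of_orderIso e ⟨w, bruhatLE_refl hs⟩
  rwa [orderIso_apply_top e _ (bruhatLE_refl ht), Bool.toNat_true, add_comm] at this

theorem count_eq_one (h : IsPrismOver n w v i) {s : List ℕ} (hs : IsReducedWord n w s) :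
    s.count i = 1 := by
  obtain ⟨r, hr, hsub⟩ := h.bruhatLE.exists_sublist hs
  have := hsub.count_add_length_le fun hi => h.not_mem_supp ((mem_supp_iff hr).2 hi)
  rw [hr.length_eq, hs.length_eq, h.invCount_eq] at this
  have hi : i ∈ s := (mem_supp_iff hs).1 (h.supp_eq ▸ Or.inr rfl)
  have := List.count_pos_iff.2 hi
  omega

theorem not_sublist_braid (h : IsPrismOver n w v i) {s : List ℕ} (hs : IsReducedWord n w s)
    (hic : Adjacent i c) : ¬ [c, i, c].Sublist s := fun hsub => by
  have hc := hs.1.1 c (hsub.subset (by simp))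
  have hi := hs.1.1 i (hsub.subset (by simp))
  refine h.not_braidElt_le hic ⟨[c, i, c], s, ?_, hs, hsub⟩
  rw [braidElt_comm hic]
  exact isReducedWord_braidElt hic.symm hc.1 hc.2 hi.1 hi.2

end IsPrismOver

theorem no_confines_general (n : ℕ) (w v : Equiv.Perm ℕ)
    (i : ℕ)
    (hvw : BruhatLE n v w)
    (hiv : i ∉ supp n v)
    (hsupp : supp n w = supp n v ∪ {i})
    (hiso : IsoC2TimesIdeal n w v) :
    ∀ s : List ℕ, IsReducedWord n w s → Unconfined i s := by
  intro s hs
  have h : IsPrismOver n w v i := ⟨hvw, hiv, hsupp, hiso.nonempty_orderIso⟩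
  have hi := hs.1.1 i ((mem_supp_iff hs).1 (hsupp ▸ Or.inr rfl))
  refine ⟨h.count_eq_one hs, fun a b hab => ?_⟩
  have hbraid (c : ℕ) (hic : Adjacent i c) : ¬ (c ∈ a ∧ c ∈ b) := fun ⟨ha, hb⟩ =>
    h.not_sublist_braid hs hic
      (hab ▸ (List.singleton_sublist.2 ha).append ((List.singleton_sublist.2 hb).cons_cons i))
  exact ⟨hbraid _ (Or.inl rfl), hbraid _ (Or.inr (by omega))⟩

/-- if B(w) ≅ C₂ × B(v) with supp(w) = supp(v) ∪ {i} and i ∉ supp(v),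
then i is unconfined in every reduced word of w. -/
theorem no_confines (n : ℕ) (w v : Equiv.Perm ℕ)
    (hw : MemSymm n w) (hv : MemSymm n v) (i : ℕ)
    (hi1 : 1 ≤ i) (hi2 : i ≤ n - 1)
    (hvw : BruhatLE n v w)
    (hiv : i ∉ supp n v)
    (hsupp : supp n w = supp n v ∪ {i})
    (hiso : IsoC2TimesIdeal n w v) :
    ∀ s : List ℕ, IsReducedWord n w s → Unconfined i s :=
  no_confines_general n w v i hvw hiv hsupp hiso
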